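/- arXiv:1710.07765 — 6 statements merged into one kernel-verified Lean document; each statement's English description precedes it below -/
import Mathlib

section
/- Let G₁ and G₂ be finite abelian groups and let F : G₁ → G₂ be any function. Then Σ_χ Σ_ψ |F̂(χ,ψ)|⁴ = |G₁|·|G₂|·Σ_{a ∈ G₁} Σ_{b ∈ G₂} δ_F(a,b)², where the outer sums run over all additive characters χ of G₁ and all additive characters ψ of G₂. -/
open Finset

/-- `δ_F(a,b) = |{x : F(x+a) - F(x) = b}|`. -/
def deltaF {G₁ G₂ : Type*} [AddCommGroup G₁] [Fintype G₁] [DecidableEq G₁]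
    [AddCommGroup G₂] [DecidableEq G₂] (F : G₁ → G₂) (a : G₁) (b : G₂) : ℕ :=
  (univ.filter fun x => F (x + a) - F x = b).card

/-- The Fourier transform `F̂(χ,ψ) = Σ_x ψ(F(x))·conj(χ(x))`. -/
noncomputable def fourierF {G₁ G₂ : Type*} [AddCommGroup G₁] [Fintype G₁]
    [AddCommGroup G₂] (F : G₁ → G₂) (χ : AddChar G₁ ℂ) (ψ : AddChar G₂ ℂ) : ℂ :=
  ∑ x : G₁, ψ (F x) * (starRingEnd ℂ) (χ x)

/-!
`F̂(χ⁻¹, ψ)` is the sum of the character `(x, y) ↦ χ x ψ y` of `G₁ × G₂` over the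
graph `Γ` of `F`. For any finset `s` of a finite abelian group, orthogonality of characters gives
`∑_ψ |∑_{x ∈ s} ψ x|⁴ = |G| E(s, -s)`, with `E` the additive energy. Finally `δ_F(a, b)` counts the
ways of writing `(a, b)` as `p - q` with `p, q ∈ Γ`, so `E(Γ, -Γ) = ∑ δ_F(a, b)²`.
-/

open scoped Pointwise Combinatorics.Additive

namespace AddChar

section Prod
variable {A B M : Type*} [AddCommGroup A] [AddCommGroup B] [CommMonoid M]

def prodEquiv : AddChar A M × AddChar B M ≃ AddChar (A × B) M where
  toFun χψ :=
    { toFun := fun p => χψ.1 p.1 * χψ.2 p.2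
      map_zero_eq_one' := by simp
      map_add_eq_mul' := fun p q => by
        simp only [Prod.fst_add, Prod.snd_add, map_add_eq_mul, mul_mul_mul_comm] }
  invFun Φ := (Φ.compAddMonoidHom (AddMonoidHom.inl A B), Φ.compAddMonoidHom (AddMonoidHom.inr A B))
  left_inv χψ := by ext <;> simp
  right_inv Φ := by ext p; simp [← map_add_eq_mul]

@[simp] lemma prodEquiv_apply (χ : AddChar A M) (ψ : AddChar B M) (p : A × B) :
    prodEquiv (χ, ψ) p = χ p.1 * ψ p.2 := rfl

end Prod

variable {G ι : Type*} [AddCommGroup G]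

lemma ofReal_norm_sum_sq [Finite G] (ψ : AddChar G ℂ) (s : Finset G) :
    (‖∑ x ∈ s, ψ x‖ : ℂ) ^ 2 = ∑ p ∈ s ×ˢ s, ψ (p.1 - p.2) := by
  rw [← Complex.mul_conj', map_sum, sum_mul_sum, sum_product]
  simp_rw [sub_eq_add_neg, map_add_eq_mul, map_neg_eq_conj]

lemma norm_sum_neg [Finite G] [DecidableEq G] (ψ : AddChar G ℂ) (s : Finset G) :
    ‖∑ x ∈ -s, ψ x‖ = ‖∑ x ∈ s, ψ x‖ := by
  simp_rw [sum_neg_index, map_neg_eq_conj, ← map_sum, Complex.norm_conj]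

variable [Fintype G] [DecidableEq G]

lemma sum_sum_apply_eq_card_mul_card_filter (u : Finset ι) (g : ι → G) :
    ∑ ψ : AddChar G ℂ, ∑ i ∈ u, ψ (g i) = Fintype.card G * #{i ∈ u | g i = 0} := by
  rw [sum_comm]
  simp_rw [sum_apply_eq_ite]
  rw [sum_ite, sum_const_zero, add_zero, sum_const, nsmul_eq_mul, mul_comm]

lemma sum_norm_sum_sq_mul_norm_sum_sq (s t : Finset G) :
    ∑ ψ : AddChar G ℂ, ‖∑ x ∈ s, ψ x‖ ^ 2 * ‖∑ x ∈ t, ψ x‖ ^ 2 = Fintype.card G * E[s, t] := by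
  suffices ∑ ψ : AddChar G ℂ, (‖∑ x ∈ s, ψ x‖ : ℂ) ^ 2 * (‖∑ x ∈ t, ψ x‖ : ℂ) ^ 2 =
      Fintype.card G * E[s, t] by exact_mod_cast this
  have expand (ψ : AddChar G ℂ) : (‖∑ x ∈ s, ψ x‖ : ℂ) ^ 2 * (‖∑ x ∈ t, ψ x‖ : ℂ) ^ 2 =
      ∑ x ∈ (s ×ˢ s) ×ˢ t ×ˢ t, ψ (x.1.1 - x.1.2 + (x.2.1 - x.2.2)) := by
    rw [ofReal_norm_sum_sq, ofReal_norm_sum_sq, sum_mul_sum, ← sum_product']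
    simp_rw [map_add_eq_mul]
  simp_rw [expand, sum_sum_apply_eq_card_mul_card_filter]
  unfold addEnergy
  simp_rw [← add_sub_add_comm, sub_eq_zero]

lemma sum_norm_sum_pow_four (s : Finset G) :
    ∑ ψ : AddChar G ℂ, ‖∑ x ∈ s, ψ x‖ ^ 4 = Fintype.card G * E[s, -s] := by
  rw [← sum_norm_sum_sq_mul_norm_sum_sq]
  simp_rw [norm_sum_neg, ← pow_add]

end AddChar

section Graph

variable {G₁ G₂ : Type*} [Fintype G₁]

def graphFinset (F : G₁ → G₂) : Finset (G₁ × G₂) :=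
  univ.map ⟨fun x => (x, F x), fun _ _ h => congrArg Prod.fst h⟩

lemma mem_graphFinset {F : G₁ → G₂} {p : G₁ × G₂} : p ∈ graphFinset F ↔ F p.1 = p.2 := by
  simp only [graphFinset, mem_map, mem_univ, true_and]
  constructor
  · rintro ⟨x, rfl⟩
    rfl
  · intro h
    exact ⟨p.1, Prod.ext rfl h⟩

variable [AddCommGroup G₁] [AddCommGroup G₂]

lemma fourierF_inv_eq_sum_graphFinset (F : G₁ → G₂) (χ : AddChar G₁ ℂ) (ψ : AddChar G₂ ℂ) :
    fourierF F χ⁻¹ ψ = ∑ p ∈ graphFinset F, AddChar.prodEquiv (χ, ψ) p := by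
  rw [graphFinset, sum_map]
  simp only [fourierF, AddChar.inv_apply, AddChar.map_neg_eq_conj, Complex.conj_conj]
  exact sum_congr rfl fun x _ => mul_comm _ _

variable [DecidableEq G₁] [DecidableEq G₂]

lemma card_graphFinset_add_neg_eq_deltaF (F : G₁ → G₂) (a : G₁) (b : G₂) :
    #{pq ∈ graphFinset F ×ˢ (-graphFinset F) | pq.1 + pq.2 = (a, b)} = deltaF F a b := by
  symm
  apply card_nbij' (fun x => ((x + a, F (x + a)), (-x, -F x))) (fun pq => -pq.2.1)
  case hi =>
    intro x hx
    simp_all [mem_graphFinset, sub_eq_add_neg]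
  case left_inv =>
    intro x _
    simp
  case hj | right_inv =>
    rintro ⟨⟨x, y⟩, ⟨u, v⟩⟩ h
    simp only [coe_filter, mem_product, mem_graphFinset, mem_neg', Prod.fst_neg, Prod.snd_neg,
      Set.mem_ofPred_eq, Prod.mk_add_mk, Prod.mk.injEq] at h
    obtain ⟨⟨rfl, hu⟩, rfl, rfl⟩ := h
    simp [hu]

lemma addEnergy_graphFinset_neg_eq_sum_deltaF_sq [Fintype G₂] (F : G₁ → G₂) :
    E[graphFinset F, -graphFinset F] = ∑ a, ∑ b, deltaF F a b ^ 2 := by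
  rw [addEnergy_eq_sum_sq, Fintype.sum_prod_type]
  simp_rw [card_graphFinset_add_neg_eq_deltaF]

end Graph

theorem fourth_moment_fourier_eq {G₁ G₂ : Type*}
    [AddCommGroup G₁] [Fintype G₁] [DecidableEq G₁]
    [AddCommGroup G₂] [Fintype G₂] [DecidableEq G₂] (F : G₁ → G₂) :
    ∑ χ : AddChar G₁ ℂ, ∑ ψ : AddChar G₂ ℂ, ‖fourierF F χ ψ‖ ^ 4 =
      (Fintype.card G₁ : ℝ) * (Fintype.card G₂ : ℝ) *
        ∑ a : G₁, ∑ b : G₂, (deltaF F a b : ℝ) ^ 2 := by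
  calc ∑ χ : AddChar G₁ ℂ, ∑ ψ : AddChar G₂ ℂ, ‖fourierF F χ ψ‖ ^ 4
      = ∑ χψ : AddChar G₁ ℂ × AddChar G₂ ℂ,
          ‖∑ p ∈ graphFinset F, AddChar.prodEquiv χψ p‖ ^ 4 := by
        rw [← Equiv.sum_comp (Equiv.inv _), Fintype.sum_prod_type]
        simp_rw [Equiv.inv_apply, fourierF_inv_eq_sum_graphFinset]
    _ = ∑ Φ : AddChar (G₁ × G₂) ℂ, ‖∑ p ∈ graphFinset F, Φ p‖ ^ 4 :=
        AddChar.prodEquiv.sum_comp fun Φ => ‖∑ p ∈ graphFinset F, Φ p‖ ^ 4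
    _ = Fintype.card (G₁ × G₂) * E[graphFinset F, -graphFinset F] :=
        AddChar.sum_norm_sum_pow_four _
    _ = _ := by
        rw [addEnergy_graphFinset_neg_eq_sum_deltaF_sq, Fintype.card_prod]
        push_cast
        rfl
end

section
/- Let G₁ and G₂ be finite abelian groups with |G₂| ≥ 2, and let F : G₁ → G₂ be any function. Then there exist an additive character χ of G₁ and a nontrivial additive character ψ of G₂ such that |F̂(χ,ψ)|² ≥ |G₁| + |G₂|·NB_F/(|G₁|·(|G₂| − 1)), where NB_F is the derivative imbalance of F (equivalently, the nonlinearity 𝒩ℒ(F) = (|G₁| − max_{χ, ψ≠1}|F̂(χ,ψ)|)/|G₂| satisfies 𝒩ℒ(F) ≤ |G₁|/|G₂| − (1/|G₂|)·√(|G₁| + |G₂|·NB_F/(|G₁|(|G₂|−1)))). -/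
/-!
Write `w(χ, ψ) = |F̂(χ,ψ)|²`. Parseval on `G₁` gives `∑_χ w = |G₁|²` for every `ψ`. Since `w(·, ψ)`
is itself the Fourier transform of the autocorrelation `a ↦ ∑_x ψ(F(x+a) − F(x))`, Parseval on
`G₁` and then on `G₂` gives `∑_{ψ,χ} w² = |G₁||G₂| ∑_{a,b} δ_F(a,b)²`; the trivial `ψ` contributes
`|G₁|⁴`. Over the pairs with `ψ ≠ 1` the quotient `∑ w² / ∑ w` is the claimed bound, and some `w`
is at least this quotient.
-/
open Finset ComplexConjugate

/-- The derivative imbalance `NB_F = Σ_{a ≠ 0} Σ_b δ_F(a,b)² − (|G₁|−1)·|G₁|²/|G₂|`. -/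
def NB {G₁ G₂ : Type*} [AddCommGroup G₁] [Fintype G₁] [DecidableEq G₁]
    [AddCommGroup G₂] [Fintype G₂] [DecidableEq G₂] (F : G₁ → G₂) : ℚ :=
  (∑ a ∈ univ.filter (fun a : G₁ => a ≠ 0), ∑ b : G₂, (deltaF F a b : ℚ) ^ 2)
    - ((Fintype.card G₁ : ℚ) - 1) * (Fintype.card G₁ : ℚ) ^ 2 / (Fintype.card G₂ : ℚ)

namespace AddChar
variable {G : Type*} [AddCommGroup G] [Fintype G]

theorem sum_norm_sq_sum_mul (c : G → ℂ) :
    ∑ χ : AddChar G ℂ, ‖∑ a, c a * χ a‖ ^ 2 = Fintype.card G * ∑ a, ‖c a‖ ^ 2 := by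
  classical
  apply Complex.ofReal_injective
  push_cast
  simp_rw [← Complex.mul_conj', map_sum, map_mul, sum_mul_sum, ← map_neg_eq_conj]
  calc ∑ χ : AddChar G ℂ, ∑ a, ∑ b, c a * χ a * (conj (c b) * χ (-b))
      = ∑ a, ∑ b, c a * conj (c b) * ∑ χ : AddChar G ℂ, χ (a - b) := by
        rw [sum_comm]
        refine sum_congr rfl fun a _ => ?_
        rw [sum_comm]
        refine sum_congr rfl fun b _ => ?_
        rw [mul_sum]
        refine sum_congr rfl fun χ _ => ?_
        rw [sub_eq_add_neg, map_add_eq_mul]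
        ring
    _ = _ := by
        simp_rw [sum_apply_eq_ite, sub_eq_zero, mul_ite, mul_zero, sum_ite_eq, mem_univ, if_true,
          mul_sum]
        exact sum_congr rfl fun a _ => mul_comm _ _

theorem sum_norm_sq_sum_mul_conj (c : G → ℂ) :
    ∑ χ : AddChar G ℂ, ‖∑ a, c a * conj (χ a)‖ ^ 2 = Fintype.card G * ∑ a, ‖c a‖ ^ 2 := by
  rw [← sum_norm_sq_sum_mul]
  exact Fintype.sum_equiv (Equiv.inv _) _ _ fun χ => by simp [← map_neg_eq_conj]

theorem sum_norm_sq_sum_comp {α : Type*} [Fintype α] [DecidableEq G] (h : α → G) :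
    ∑ ψ : AddChar G ℂ, ‖∑ x, ψ (h x)‖ ^ 2
      = Fintype.card G * ∑ b, (#{x | h x = b} : ℝ) ^ 2 := by
  have hfib : ∀ ψ : AddChar G ℂ, ∑ x, ψ (h x) = ∑ b, (#{x | h x = b} : ℂ) * ψ b := by
    intro ψ
    rw [← sum_fiberwise univ h]
    refine sum_congr rfl fun b _ => ?_
    rw [sum_congr rfl fun x hx => by rw [(mem_filter.1 hx).2], sum_const, nsmul_eq_mul]
  simp_rw [hfib, sum_norm_sq_sum_mul, Complex.norm_natCast]

end AddChar

theorem Finset.exists_sum_sq_div_sum_le {ι α : Type*} [Field α] [LinearOrder α]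
    [IsStrictOrderedRing α] {s : Finset ι} {f : ι → α} (hs : s.Nonempty)
    (hf : ∀ i ∈ s, 0 ≤ f i) : ∃ i ∈ s, (∑ j ∈ s, f j ^ 2) / ∑ j ∈ s, f j ≤ f i := by
  obtain ⟨i, hi, hmax⟩ := s.exists_max_image f hs
  refine ⟨i, hi, div_le_of_le_mul₀ (sum_nonneg hf) (hf i hi) ?_⟩
  rw [mul_sum]
  exact sum_le_sum fun j hj => by
    rw [sq]; exact mul_le_mul_of_nonneg_right (hmax j hj) (hf j hj)

section Fourier
variable {G₁ G₂ : Type*} [AddCommGroup G₁] [Fintype G₁] [AddCommGroup G₂] (F : G₁ → G₂)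

section
variable [Finite G₂]

theorem norm_fourierF_sq (χ : AddChar G₁ ℂ) (ψ : AddChar G₂ ℂ) :
    (‖fourierF F χ ψ‖ ^ 2 : ℂ) = ∑ a, (∑ x, ψ (F (x + a) - F x)) * conj (χ a) := by
  rw [← Complex.mul_conj', fourierF, map_sum, sum_mul_sum, sum_comm]
  simp_rw [sum_mul]
  conv_rhs => rw [sum_comm]
  refine sum_congr rfl fun y _ => Fintype.sum_equiv (Equiv.subRight y) _ _ fun x => ?_
  rw [Equiv.subRight_apply, add_sub_cancel]
  simp only [sub_eq_add_neg, AddChar.map_add_eq_mul, AddChar.map_neg_eq_conj, map_mul,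
    Complex.conj_conj]
  ring

theorem sum_norm_fourierF_sq (ψ : AddChar G₂ ℂ) :
    ∑ χ : AddChar G₁ ℂ, ‖fourierF F χ ψ‖ ^ 2 = (Fintype.card G₁ : ℝ) ^ 2 := by
  simp_rw [fourierF, AddChar.sum_norm_sq_sum_mul_conj, AddChar.norm_apply]
  simp [sq]

theorem sum_norm_fourierF_pow_four (ψ : AddChar G₂ ℂ) :
    ∑ χ : AddChar G₁ ℂ, ‖fourierF F χ ψ‖ ^ 4
      = Fintype.card G₁ * ∑ a, ‖∑ x, ψ (F (x + a) - F x)‖ ^ 2 := by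
  have h (χ : AddChar G₁ ℂ) : ‖fourierF F χ ψ‖ ^ 4
      = ‖∑ a, (∑ x, ψ (F (x + a) - F x)) * conj (χ a)‖ ^ 2 := by
    rw [← norm_fourierF_sq]
    norm_cast
    rw [norm_pow, norm_norm, ← pow_mul]
  simp_rw [h, AddChar.sum_norm_sq_sum_mul_conj]

theorem sum_norm_fourierF_one_pow_four :
    ∑ χ : AddChar G₁ ℂ, ‖fourierF F χ 1‖ ^ 4 = (Fintype.card G₁ : ℝ) ^ 4 := by
  rw [sum_norm_fourierF_pow_four]
  simp only [AddChar.one_apply, sum_const, card_univ, nsmul_eq_mul, mul_one, RCLike.norm_natCast]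
  ring

end

variable [Fintype G₂]

theorem sum_ne_one_sum_norm_fourierF_sq :
    ∑ ψ ∈ univ.erase (1 : AddChar G₂ ℂ), ∑ χ : AddChar G₁ ℂ, ‖fourierF F χ ψ‖ ^ 2
      = ((Fintype.card G₂ : ℝ) - 1) * (Fintype.card G₁ : ℝ) ^ 2 := by
  simp_rw [sum_norm_fourierF_sq, sum_const, card_erase_of_mem (mem_univ _), card_univ,
    AddChar.card_eq, nsmul_eq_mul, Nat.cast_pred Fintype.card_pos]

variable [DecidableEq G₁] [DecidableEq G₂]

theorem sum_sum_norm_fourierF_pow_four :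
    ∑ ψ : AddChar G₂ ℂ, ∑ χ : AddChar G₁ ℂ, ‖fourierF F χ ψ‖ ^ 4
      = Fintype.card G₁ * Fintype.card G₂ * ∑ a, ∑ b, (deltaF F a b : ℝ) ^ 2 := by
  simp_rw [sum_norm_fourierF_pow_four, ← mul_sum]
  rw [sum_comm]
  simp_rw [AddChar.sum_norm_sq_sum_comp, ← mul_sum, deltaF]
  ring

theorem sum_deltaF_zero_sq : ∑ b, (deltaF F 0 b : ℝ) ^ 2 = (Fintype.card G₁ : ℝ) ^ 2 := by
  simp [deltaF, apply_ite]

theorem sum_ne_one_sum_norm_fourierF_pow_four :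
    ∑ ψ ∈ univ.erase (1 : AddChar G₂ ℂ), ∑ χ : AddChar G₁ ℂ, ‖fourierF F χ ψ‖ ^ 4
      = (Fintype.card G₁ : ℝ) ^ 3 * ((Fintype.card G₂ : ℝ) - 1)
        + Fintype.card G₁ * Fintype.card G₂ * (NB F : ℝ) := by
  have htotal := sum_sum_norm_fourierF_pow_four F
  rw [← add_sum_erase _ _ (mem_univ 1), sum_norm_fourierF_one_pow_four,
    ← add_sum_erase _ _ (mem_univ 0), sum_deltaF_zero_sq] at htotal
  have hNB : (NB F : ℝ) = ∑ a ∈ univ.erase 0, ∑ b, (deltaF F a b : ℝ) ^ 2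
      - ((Fintype.card G₁ : ℝ) - 1) * (Fintype.card G₁ : ℝ) ^ 2 / Fintype.card G₂ := by
    rw [NB, filter_ne']
    push_cast
    rfl
  have hcard : (Fintype.card G₂ : ℝ) ≠ 0 := Nat.cast_ne_zero.2 Fintype.card_ne_zero
  rw [hNB]
  field_simp
  linear_combination htotal

end Fourier

theorem exists_large_fourier_coefficient {G₁ G₂ : Type*}
    [AddCommGroup G₁] [Fintype G₁] [DecidableEq G₁]
    [AddCommGroup G₂] [Fintype G₂] [DecidableEq G₂]
    (h₂ : 2 ≤ Fintype.card G₂) (F : G₁ → G₂) :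
    ∃ (χ : AddChar G₁ ℂ) (ψ : AddChar G₂ ℂ), ψ ≠ 1 ∧
      (Fintype.card G₁ : ℝ) +
          (Fintype.card G₂ : ℝ) * (NB F : ℝ) /
            ((Fintype.card G₁ : ℝ) * ((Fintype.card G₂ : ℝ) - 1)) ≤
        ‖fourierF F χ ψ‖ ^ 2 := by
  set w : AddChar G₂ ℂ × AddChar G₁ ℂ → ℝ := fun p => ‖fourierF F p.2 p.1‖ ^ 2
  set P := univ.erase (1 : AddChar G₂ ℂ) ×ˢ (univ : Finset (AddChar G₁ ℂ))
  have hsum : ∑ p ∈ P, w p = ((Fintype.card G₂ : ℝ) - 1) * (Fintype.card G₁ : ℝ) ^ 2 := by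
    rw [sum_product]
    exact sum_ne_one_sum_norm_fourierF_sq F
  have hsum_sq : ∑ p ∈ P, w p ^ 2 = (Fintype.card G₁ : ℝ) ^ 3 * ((Fintype.card G₂ : ℝ) - 1)
      + Fintype.card G₁ * Fintype.card G₂ * (NB F : ℝ) := by
    rw [sum_product]
    simp_rw [w, ← pow_mul]
    exact sum_ne_one_sum_norm_fourierF_pow_four F
  have hG₂ : (0 : ℝ) < Fintype.card G₂ - 1 := by rw [sub_pos]; exact_mod_cast h₂
  have hpos : 0 < ∑ p ∈ P, w p := by rw [hsum]; positivity
  obtain ⟨⟨ψ, χ⟩, hp, hle⟩ := exists_sum_sq_div_sum_le (f := w)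
    (nonempty_of_sum_ne_zero hpos.ne') fun _ _ => sq_nonneg _
  refine ⟨χ, ψ, (mem_erase.1 (mem_product.1 hp).1).1, le_of_eq_of_le ?_ hle⟩
  rw [hsum, hsum_sq]
  field_simp [hG₂.ne']
end

section
/- Let p be an odd prime, n ≥ 1, q = pⁿ, and let K be the finite field with q elements. Let i ≥ j ≥ 0 be integers, let F : K → K be the monomial function F(x) = x^(pⁱ + pʲ), and set s = gcd(i − j, n). Then Σ_{a ∈ K, a ≠ 0} Σ_{b ∈ K} δ_F(a,b)² equals q·(q − 1)·pˢ if n/s is even, and equals q·(q − 1) if n/s is odd (equivalently, NB_F = q(q−1)(pˢ − 1) in the first case and NB_F = 0, i.e. F is perfect nonlinear, in the second case). -/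
/-!
The derivative `F (x + a) - F x` of `F x = x ^ (p ^ i + p ^ j)` is an additive map `L_a` plus the
constant `F a`, so `∑ b, δ_F(a, b) ^ 2` counts the pairs `(x, y)` with `L_a x = L_a y`, that is
`q * #(ker L_a)`. With `k = i - j`, `L_a (a * u) = (a ^ (p ^ k + 1) * (u ^ p ^ k + u)) ^ p ^ j`, so for
`a ≠ 0` the kernel consists of `0` and the units with `u ^ (p ^ k - 1) = -1`. In the cyclic group
`Kˣ` of order `q - 1`, `u ^ m = -1` has `gcd (q - 1) m` solutions if `(q - 1) / gcd (q - 1) m` is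
even and none otherwise. Finally `gcd (p ^ n - 1) (p ^ k - 1) = p ^ s - 1`, and
`(p ^ n - 1) / (p ^ s - 1) = ∑ l < n / s, p ^ (s * l)` is a sum of `n / s` odd numbers.
-/

open Finset

theorem sum_sq_card_filter_eq_card_filter_eq {α β : Type*} [Fintype α] [Fintype β]
    [DecidableEq β] (f : α → β) :
    ∑ b : β, #{x | f x = b} ^ 2 = #{z : α × α | f z.1 = f z.2} := by
  classical
  rw [card_eq_sum_card_fiberwise (f := fun z : α × α => f z.1) (t := univ) (by simp)]
  refine sum_congr rfl fun b _ => ?_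
  rw [sq, ← card_product, filter_filter]
  congr 1
  ext z
  simp only [mem_product, mem_filter, mem_univ, true_and]
  constructor <;> rintro ⟨h1, h2⟩ <;> simp_all

theorem AddMonoidHom.sum_sq_card_filter_add_eq {G H : Type*} [AddCommGroup G] [Fintype G]
    [DecidableEq G] [AddCommGroup H] [Fintype H] [DecidableEq H] (L : G →+ H) (c : H) :
    ∑ b : H, #{x | L x + c = b} ^ 2 = Fintype.card G * #{x | L x = 0} := by
  rw [sum_sq_card_filter_eq_card_filter_eq, ← card_univ, ← card_product]
  simp_rw [add_left_inj]
  refine card_nbij' (fun z => (z.2, z.1 - z.2)) (fun w => (w.2 + w.1, w.1)) ?_ ?_ ?_ ?_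
  · rintro ⟨x, y⟩ h; simp_all
  · rintro ⟨x, y⟩ h; simp_all
  · rintro ⟨x, y⟩ _; simp
  · rintro ⟨x, y⟩ _; simp

theorem IsCyclic.mem_powMonoidHom_range_iff {G : Type*} [CommGroup G] [IsCyclic G] [Finite G]
    (m : ℕ) (c : G) :
    c ∈ (powMonoidHom m : G →* G).range ↔ c ^ (Nat.card G / (Nat.card G).gcd m) = 1 := by
  set N := Nat.card G
  have hdvd : N / N.gcd m ∣ N := Nat.div_dvd_of_dvd (Nat.gcd_dvd_left N m)
  have hle : (powMonoidHom m : G →* G).range ≤ (powMonoidHom (N / N.gcd m)).ker := by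
    rintro _ ⟨v, rfl⟩
    simp only [MonoidHom.mem_ker, powMonoidHom_apply, ← pow_mul]
    rw [mul_comm, Nat.div_mul_right_comm (Nat.gcd_dvd_left N m),
      Nat.mul_div_assoc N (Nat.gcd_dvd_right N m), pow_mul, pow_card_eq_one', one_pow]
  have heq := Subgroup.eq_of_le_of_card_ge hle (by
    rw [IsCyclic.card_powMonoidHom_ker, IsCyclic.card_powMonoidHom_range, Nat.gcd_eq_right hdvd])
  rw [heq, MonoidHom.mem_ker, powMonoidHom_apply]

theorem IsCyclic.card_filter_pow_eq {G : Type*} [CommGroup G] [IsCyclic G] [Fintype G]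
    [DecidableEq G] (m : ℕ) (c : G) :
    #{v : G | v ^ m = c} =
      if c ^ (Nat.card G / (Nat.card G).gcd m) = 1 then (Nat.card G).gcd m else 0 := by
  split_ifs with hc
  · rw [← IsCyclic.mem_powMonoidHom_range_iff] at hc
    have hfiber := MonoidHom.card_fiber_eq_of_mem_range (powMonoidHom m : G →* G) hc ⟨1, one_pow m⟩
    simp only [powMonoidHom_apply] at hfiber
    rw [hfiber, ← IsCyclic.card_powMonoidHom_ker, Nat.card_eq_fintype_card, Fintype.card_subtype]
    simp only [MonoidHom.mem_ker, powMonoidHom_apply]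
  · rw [card_eq_zero, filter_eq_empty_iff]
    rintro v - rfl
    exact hc ((IsCyclic.mem_powMonoidHom_range_iff m _).mp ⟨v, rfl⟩)

theorem Nat.even_pow_sub_one_div_pow_sub_one_iff {p s n : ℕ} (hp1 : 1 < p) (hp : Odd p)
    (hs : s ∣ n) : Even ((p ^ n - 1) / (p ^ s - 1)) ↔ Even (n / s) := by
  obtain ⟨t, rfl⟩ := hs
  rcases s.eq_zero_or_pos with rfl | hs0
  · simp
  rw [Nat.mul_div_cancel_left t hs0, pow_mul,
    ← Nat.geomSum_eq ((Nat.le_self_pow hs0.ne' p).trans' hp1) t,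
    ← ZMod.natCast_eq_zero_iff_even, ← ZMod.natCast_eq_zero_iff_even]
  push_cast
  simp [hp.natCast_zmod_two]

theorem card_filter_eq_zero_or {M₀ : Type*} [GroupWithZero M₀] [Fintype M₀] [DecidableEq M₀]
    (P : M₀ → Prop) [DecidablePred P] :
    #{x | x = 0 ∨ P x} = 1 + #{u : M₀ˣ | P u} := by
  have hsplit : (univ.filter fun x : M₀ => x = 0 ∨ P x) =
      insert 0 (univ.filter fun x => x ≠ 0 ∧ P x) := by
    ext x
    by_cases hx : x = 0 <;> simp [hx]
  rw [hsplit, card_insert_of_notMem (by simp), add_comm]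
  congr 1
  symm
  refine card_bij (fun u _ => (u : M₀)) (fun u hu => ?_) (fun u _ v _ h => Units.ext h)
    (fun x hx => ?_)
  · simp_all
  · simp only [mem_filter, mem_univ, true_and] at hx
    exact ⟨Units.mk0 x hx.1, by simpa using hx.2, rfl⟩

theorem FiniteField.card_filter_units_pow_eq_neg_one {K : Type*} [Field K] [Fintype K]
    [DecidableEq K] (hK : ringChar K ≠ 2) (m : ℕ) :
    #{u : Kˣ | u ^ m = -1} =
      if Even ((Fintype.card K - 1) / (Fintype.card K - 1).gcd m) then
        (Fintype.card K - 1).gcd m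
      else 0 := by
  have hneg : (-1 : Kˣ) ≠ 1 := fun h =>
    Ring.neg_one_ne_one_of_char_ne_two hK (by simpa using congrArg Units.val h)
  simp only [IsCyclic.card_filter_pow_eq, neg_one_pow_eq_one_iff_even hneg, Nat.card_eq_fintype_card,
    Fintype.card_units]

section MonomialPolar

variable {K : Type*} [Field K] (p : ℕ) [ExpChar K p]

def monomialPolar (i j : ℕ) (a : K) : K →+ K :=
  AddMonoidHom.mk' (fun x => a ^ p ^ j * x ^ p ^ i + a ^ p ^ i * x ^ p ^ j) fun x y => by
    simp only [add_pow_expChar_pow]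
    ring

theorem add_pow_sub_pow_eq_monomialPolar (i j : ℕ) (a x : K) :
    (x + a) ^ (p ^ i + p ^ j) - x ^ (p ^ i + p ^ j) =
      monomialPolar p i j a x + a ^ (p ^ i + p ^ j) := by
  simp only [monomialPolar, AddMonoidHom.mk'_apply, pow_add, add_pow_expChar_pow]
  ring

theorem monomialPolar_mul_left (j k : ℕ) (a u : K) :
    monomialPolar p (j + k) j a (a * u) = (a ^ (p ^ k + 1) * (u ^ p ^ k + u)) ^ p ^ j := by
  simp only [monomialPolar, AddMonoidHom.mk'_apply, mul_pow, add_pow_expChar_pow, ← pow_mul,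
    pow_add]
  ring

theorem card_filter_monomialPolar_eq_zero [Fintype K] [DecidableEq K] {a : K} (ha : a ≠ 0)
    (j k : ℕ) :
    #{x | monomialPolar p (j + k) j a x = 0} = 1 + #{u : Kˣ | u ^ (p ^ k - 1) = -1} := by
  have hp : 0 < p := expChar_pos K p
  have hroot (u : K) : u ^ p ^ k + u = 0 ↔ u = 0 ∨ u ^ (p ^ k - 1) = -1 := by
    rw [← pow_sub_one_mul (pow_pos hp k).ne', ← add_one_mul, mul_eq_zero, add_eq_zero_iff_eq_neg,
      or_comm]
  have hunits : #{u : Kˣ | u ^ (p ^ k - 1) = -1} = #{u : Kˣ | (u : K) ^ (p ^ k - 1) = -1} := by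
    simp [Units.ext_iff]
  rw [hunits, ← card_filter_eq_zero_or fun u : K => u ^ (p ^ k - 1) = -1]
  simp_rw [← hroot]
  refine card_nbij' (fun x => a⁻¹ * x) (fun u => a * u) ?_ ?_ ?_ ?_
  · intro x hx
    simp only [mem_coe, mem_filter, mem_univ, true_and] at hx ⊢
    rw [← mul_inv_cancel_left₀ ha x, monomialPolar_mul_left] at hx
    rw [pow_eq_zero_iff (pow_pos hp j).ne', mul_eq_zero] at hx
    exact hx.resolve_left (pow_ne_zero _ ha)
  · intro u hu
    simp only [mem_coe, mem_filter, mem_univ, true_and] at hu ⊢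
    rw [monomialPolar_mul_left, hu, mul_zero, zero_pow (pow_pos hp j).ne']
  · intro x _; simp [ha]
  · intro u _; simp [ha]

end MonomialPolar

theorem sum_sq_delta_monomial_odd_char_general (p n : ℕ) (hp : p.Prime) (hodd : Odd p)
    (K : Type*) [Field K] [Fintype K] [DecidableEq K]
    (hK : Fintype.card K = p ^ n) (i j : ℕ) (hij : j ≤ i)
    (F : K → K) (hF : ∀ x : K, F x = x ^ (p ^ i + p ^ j)) :
    (∑ a ∈ univ.filter (fun a : K => a ≠ 0), ∑ b : K, (deltaF F a b) ^ 2) =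
      if Even (n / Nat.gcd (i - j) n) then
        p ^ n * (p ^ n - 1) * p ^ (Nat.gcd (i - j) n)
      else p ^ n * (p ^ n - 1) := by
  have : Fact p.Prime := ⟨hp⟩
  have : CharP K p := charP_of_card_eq_prime_pow hK
  have hchar : ringChar K ≠ 2 := by
    rw [ringChar.eq K p]
    rintro rfl
    exact Nat.not_odd_iff_even.mpr even_two hodd
  obtain ⟨k, rfl⟩ := Nat.exists_eq_add_of_le hij
  have hinner (a : K) (ha : a ≠ 0) :
      ∑ b, deltaF F a b ^ 2 = p ^ n * (1 + #{u : Kˣ | u ^ (p ^ k - 1) = -1}) := by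
    simp only [deltaF, hF, add_pow_sub_pow_eq_monomialPolar]
    rw [AddMonoidHom.sum_sq_card_filter_add_eq, card_filter_monomialPolar_eq_zero p ha, hK]
  rw [sum_congr rfl fun a ha => hinner a (mem_filter.mp ha).2, sum_const, filter_ne' univ (0 : K),
    card_erase_of_mem (mem_univ 0), card_univ, hK, smul_eq_mul,
    FiniteField.card_filter_units_pow_eq_neg_one hchar, hK, Nat.pow_sub_one_gcd_pow_sub_one,
    Nat.gcd_comm n k, Nat.add_sub_cancel_left]
  simp only [Nat.even_pow_sub_one_div_pow_sub_one_iff hp.one_lt hodd (Nat.gcd_dvd_right k n)]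
  split_ifs
  · rw [Nat.add_sub_cancel' (Nat.one_le_pow _ _ hp.pos)]
    ring
  · ring

theorem sum_sq_delta_monomial_odd_char (p n : ℕ) (hp : p.Prime) (hodd : Odd p)
    (hn : 1 ≤ n) (K : Type*) [Field K] [Fintype K] [DecidableEq K]
    (hK : Fintype.card K = p ^ n) (i j : ℕ) (hij : j ≤ i)
    (F : K → K) (hF : ∀ x : K, F x = x ^ (p ^ i + p ^ j)) :
    (∑ a ∈ univ.filter (fun a : K => a ≠ 0), ∑ b : K, (deltaF F a b) ^ 2) =
      if Even (n / Nat.gcd (i - j) n) then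
        p ^ n * (p ^ n - 1) * p ^ (Nat.gcd (i - j) n)
      else p ^ n * (p ^ n - 1) :=
  sum_sq_delta_monomial_odd_char_general p n hp hodd K hK i j hij F hF
end

section
/- Let G be a finite abelian group of odd order n ≥ 3 and let F : G → G be a bijection whose ambiguity achieves the optimum value 𝒜(F) = 2(n − 1). Then there exist an additive character χ of G and a nontrivial additive character ψ of G such that |Σ_{x ∈ G} ψ(F(x))·conj(χ(x))|² ≥ n + 4 (equivalently, the nonlinearity satisfies 𝒩ℒ(F) ≤ (n − √(n+4))/n). -/
/-!
Write `W(ψ, χ) = ‖∑ₓ ψ(F x) conj(χ x)‖²`. Parseval gives `∑_χ W(ψ, χ) = n²` for every `ψ`.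
By Wiener–Khinchin, `W(ψ, ·)` is the Fourier transform of the autocorrelation of `ψ ∘ F`, whose
value at `a` is in turn the (conjugate) Fourier coefficient of the row `δ_F(a, ·)` at `ψ`; two more
applications of Parseval give `∑_{ψ,χ} W² = n² ∑_{a,b} δ_F(a,b)² = n² (2n² - n + 2𝒜(F))`.
Removing `ψ = 1`, which contributes `n²` and `n⁴`, the `W`-weighted mean of `W` over `ψ ≠ 1` is
`n + 2𝒜(F)/(n - 1)`, so some `W(ψ, χ)` with `ψ ≠ 1` is at least that; for `𝒜(F) = 2(n - 1)`
it is `n + 4`.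
-/

open Finset

/-- The ambiguity `𝒜(F) = Σ_{a ≠ 0} Σ_b (δ_F(a,b) choose 2)`. -/
def ambiguity {G₁ G₂ : Type*} [AddCommGroup G₁] [Fintype G₁] [DecidableEq G₁]
    [AddCommGroup G₂] [Fintype G₂] [DecidableEq G₂] (F : G₁ → G₂) : ℕ :=
  ∑ a ∈ univ.filter (fun a : G₁ => a ≠ 0), ∑ b : G₂, (deltaF F a b).choose 2

open ComplexConjugate

section Fourier

variable {G : Type*} [AddCommGroup G] [Fintype G]

noncomputable def charCoeff (f : G → ℂ) (χ : AddChar G ℂ) : ℂ :=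
  ∑ x, f x * conj (χ x)

noncomputable def autocorr (f : G → ℂ) (a : G) : ℂ :=
  ∑ x, f (x + a) * conj (f x)

lemma AddChar.map_sub_eq_mul_conj (χ : AddChar G ℂ) (x y : G) :
    χ (x - y) = χ x * conj (χ y) := by
  rw [sub_eq_add_neg, AddChar.map_add_eq_mul, AddChar.map_neg_eq_conj]

theorem sum_sq_norm_charCoeff (f : G → ℂ) :
    ∑ χ : AddChar G ℂ, ‖charCoeff f χ‖ ^ 2 = Fintype.card G * ∑ x, ‖f x‖ ^ 2 := by
  classical
  have expand (χ : AddChar G ℂ) :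
      (‖charCoeff f χ‖ : ℂ) ^ 2 = ∑ x, ∑ y, f x * conj (f y) * χ (y - x) := by
    rw [← Complex.mul_conj', charCoeff, map_sum, sum_mul_sum]
    refine sum_congr rfl fun x _ => sum_congr rfl fun y _ => ?_
    rw [map_mul, Complex.conj_conj, χ.map_sub_eq_mul_conj]
    ring
  apply Complex.ofReal_injective
  push_cast
  simp_rw [expand, ← Complex.mul_conj', mul_sum]
  rw [sum_comm]
  refine sum_congr rfl fun x _ => ?_
  rw [sum_comm]
  simp_rw [← mul_sum, AddChar.sum_apply_eq_ite, sub_eq_zero]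
  simp only [mul_ite, mul_zero, sum_ite_eq', mem_univ, if_true]
  ring

theorem charCoeff_mul_conj (f : G → ℂ) (χ : AddChar G ℂ) :
    charCoeff f χ * conj (charCoeff f χ) = charCoeff (autocorr f) χ :=
  calc charCoeff f χ * conj (charCoeff f χ)
      = ∑ y, ∑ x, f x * conj (f y) * conj (χ (x - y)) := by
        rw [charCoeff, map_sum, sum_mul_sum, sum_comm]
        refine sum_congr rfl fun y _ => sum_congr rfl fun x _ => ?_
        rw [χ.map_sub_eq_mul_conj, map_mul, map_mul, Complex.conj_conj]
        ring
    _ = ∑ y, ∑ a, f (y + a) * conj (f y) * conj (χ a) :=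
        sum_congr rfl fun y _ => Fintype.sum_equiv (Equiv.subRight y) _ _ fun x => by
          simp only [Equiv.subRight_apply, add_sub_cancel]
    _ = charCoeff (autocorr f) χ := by
        simp only [charCoeff, autocorr, sum_mul]
        rw [sum_comm]

theorem sum_sq_sq_norm_charCoeff (f : G → ℂ) :
    ∑ χ : AddChar G ℂ, (‖charCoeff f χ‖ ^ 2) ^ 2 = Fintype.card G * ∑ a, ‖autocorr f a‖ ^ 2 := by
  rw [← sum_sq_norm_charCoeff]
  refine sum_congr rfl fun χ _ => ?_
  rw [← charCoeff_mul_conj, Complex.mul_conj', ← Complex.ofReal_pow, Complex.norm_real,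
    Real.norm_of_nonneg (by positivity)]

theorem sum_sq_norm_charCoeff_addChar_comp {H : Type*} [AddCommGroup H] [Finite H]
    (F : G → H) (ψ : AddChar H ℂ) :
    ∑ χ : AddChar G ℂ, ‖charCoeff (fun x => ψ (F x)) χ‖ ^ 2 = (Fintype.card G : ℝ) ^ 2 := by
  rw [sum_sq_norm_charCoeff]
  simp [sq]

theorem sq_norm_charCoeff_const_one (χ : AddChar G ℂ) :
    ‖charCoeff (fun _ => 1) χ‖ ^ 2 = if χ = 1 then (Fintype.card G : ℝ) ^ 2 else 0 := by
  classical
  have : charCoeff (fun _ => 1) χ = conj (∑ x, χ x) := by simp [charCoeff]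
  rw [this, AddChar.sum_eq_ite, ← AddChar.one_eq_zero]
  split_ifs <;> simp

end Fourier

section Ambiguity

variable {G H : Type*} [AddCommGroup G] [Fintype G] [DecidableEq G]
  [AddCommGroup H] [DecidableEq H]

theorem deltaF_zero_left (F : G → H) (b : H) :
    deltaF F 0 b = if b = 0 then Fintype.card G else 0 := by
  simp only [deltaF, add_zero, sub_self]
  split_ifs with hb <;> simp [hb, eq_comm]

variable [Fintype H]

theorem sum_deltaF_smul (F : G → H) (a : G) {M : Type*} [AddCommMonoid M] (g : H → M) :
    ∑ b, deltaF F a b • g b = ∑ x, g (F (x + a) - F x) := by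
  simp only [deltaF, ← sum_const]
  exact sum_fiberwise' _ _ _

theorem sum_deltaF (F : G → H) (a : G) : ∑ b, deltaF F a b = Fintype.card G := by
  simpa using sum_deltaF_smul F a fun _ => (1 : ℕ)

theorem autocorr_addChar_comp (F : G → H) (ψ : AddChar H ℂ) (a : G) :
    autocorr (fun x => ψ (F x)) a = conj (charCoeff (fun b => (deltaF F a b : ℂ)) ψ) := by
  simp only [charCoeff, map_sum, map_mul, Complex.conj_conj, ← nsmul_eq_mul,
    sum_deltaF_smul, autocorr, ψ.map_sub_eq_mul_conj]

theorem sum_sum_sq_deltaF (F : G → H) :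
    ∑ a, ∑ b, (deltaF F a b : ℝ) ^ 2 =
      (Fintype.card G : ℝ) ^ 2 + Fintype.card G * (Fintype.card G - 1) + 2 * ambiguity F := by
  have row_zero : ∑ b, (deltaF F 0 b : ℝ) ^ 2 = (Fintype.card G : ℝ) ^ 2 := by
    simp [deltaF_zero_left]
  have row (a : G) : ∑ b, (deltaF F a b : ℝ) ^ 2 =
      2 * ∑ b, ((deltaF F a b).choose 2 : ℝ) + Fintype.card G := by
    have sq_eq (m : ℕ) : (m : ℝ) ^ 2 = 2 * (m.choose 2 : ℝ) + m := by
      rw [Nat.cast_choose_two]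
      ring
    rw [← sum_deltaF F a]
    push_cast
    simp_rw [sq_eq, sum_add_distrib, mul_sum]
  rw [← add_sum_erase _ _ (mem_univ 0), row_zero, sum_congr rfl fun a _ => row a, sum_add_distrib,
    ← mul_sum, sum_const, card_erase_of_mem (mem_univ 0), card_univ, ambiguity, filter_ne']
  rw [nsmul_eq_mul, Nat.cast_pred Fintype.card_pos]
  push_cast
  ring

theorem sum_sum_sq_sq_norm_charCoeff_addChar_comp (F : G → H) :
    ∑ ψ : AddChar H ℂ, ∑ χ : AddChar G ℂ, (‖charCoeff (fun x => ψ (F x)) χ‖ ^ 2) ^ 2 =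
      Fintype.card G * Fintype.card H * ∑ a, ∑ b, (deltaF F a b : ℝ) ^ 2 := by
  simp_rw [sum_sq_sq_norm_charCoeff, autocorr_addChar_comp, Complex.norm_conj, ← mul_sum]
  rw [sum_comm]
  simp_rw [sum_sq_norm_charCoeff, mul_sum]
  simp [mul_assoc]

end Ambiguity

theorem Finset.exists_le_of_mul_sum_le_sum_sq {ι : Type*} {s : Finset ι} {w : ι → ℝ} {c : ℝ}
    (hw : ∀ i ∈ s, 0 ≤ w i) (hpos : 0 < ∑ i ∈ s, w i)
    (h : c * ∑ i ∈ s, w i ≤ ∑ i ∈ s, w i ^ 2) : ∃ i ∈ s, c ≤ w i := by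
  by_contra! hlt
  obtain ⟨j, hj, hwj⟩ : ∃ j ∈ s, 0 < w j := by
    by_contra! hle
    exact (sum_nonpos hle).not_gt hpos
  have : ∑ i ∈ s, w i ^ 2 < ∑ i ∈ s, c * w i :=
    sum_lt_sum (fun i hi => by nlinarith [hw i hi, hlt i hi]) ⟨j, hj, by nlinarith [hlt j hj]⟩
  rw [← mul_sum] at this
  linarith

theorem exists_sq_norm_charCoeff_comp_ge {G : Type*} [AddCommGroup G] [Fintype G] [DecidableEq G]
    [Nontrivial G] (F : G → G) :
    ∃ χ ψ : AddChar G ℂ, ψ ≠ 1 ∧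
      (Fintype.card G : ℝ) + 2 * ambiguity F / (Fintype.card G - 1) ≤
        ‖charCoeff (fun x => ψ (F x)) χ‖ ^ 2 := by
  set n : ℝ := (Fintype.card G : ℝ)
  have hn : 0 < n - 1 := sub_pos.2 (Nat.one_lt_cast.2 Fintype.one_lt_card)
  set W : AddChar G ℂ × AddChar G ℂ → ℝ := fun p => ‖charCoeff (fun x => p.1 (F x)) p.2‖ ^ 2
  set s := (univ : Finset (AddChar G ℂ)).erase 1 ×ˢ (univ : Finset (AddChar G ℂ))
  have sum_W : ∑ p ∈ s, W p = (n - 1) * n ^ 2 := by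
    simp only [s, W, sum_product, sum_sq_norm_charCoeff_addChar_comp, sum_const,
      card_erase_of_mem (mem_univ _), card_univ, AddChar.card_eq, nsmul_eq_mul]
    rw [Nat.cast_pred Fintype.card_pos]
  have sum_W_sq : ∑ p ∈ s, W p ^ 2 = n ^ 2 * (n * (n - 1) + 2 * ambiguity F) := by
    have trivial_row : ∑ χ, W (1, χ) ^ 2 = n ^ 4 := by
      simp [W, n, sq_norm_charCoeff_const_one, ite_pow, ← pow_mul]
    rw [sum_product, sum_erase_eq_sub (mem_univ _), trivial_row]
    simp only [W, sum_sum_sq_sq_norm_charCoeff_addChar_comp, sum_sum_sq_deltaF]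
    ring
  obtain ⟨⟨ψ, χ⟩, hp, hle⟩ := exists_le_of_mul_sum_le_sum_sq (s := s) (w := W)
    (c := n + 2 * ambiguity F / (n - 1)) (fun _ _ => by positivity) (by rw [sum_W]; positivity)
    (le_of_eq (by rw [sum_W, sum_W_sq]; field_simp))
  exact ⟨χ, ψ, (mem_erase.1 (mem_product.1 hp).1).1, hle⟩

theorem optimum_ambiguity_nonlinearity_upper_bound_general {G : Type*}
    [AddCommGroup G] [Fintype G] [DecidableEq G] (n : ℕ) (hn : 3 ≤ n)
    (hcard : Fintype.card G = n) (F : G → G)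
    (hopt : ambiguity F = 2 * (n - 1)) :
    ∃ (χ ψ : AddChar G ℂ), ψ ≠ 1 ∧
      (n : ℝ) + 4 ≤ ‖∑ x : G, ψ (F x) * (starRingEnd ℂ) (χ x)‖ ^ 2 := by
  have : Nontrivial G := Fintype.one_lt_card_iff_nontrivial.1 (by omega)
  obtain ⟨χ, ψ, hψ, hle⟩ := exists_sq_norm_charCoeff_comp_ge F
  refine ⟨χ, ψ, hψ, ?_⟩
  have hn1 : (n : ℝ) - 1 ≠ 0 := sub_ne_zero.2 (by norm_cast; omega)
  have : 2 * (ambiguity F : ℝ) / (n - 1) = 4 := by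
    rw [hopt, Nat.cast_mul, Nat.cast_pred (by omega)]
    field_simp
    norm_num
  rwa [hcard, this] at hle

theorem optimum_ambiguity_nonlinearity_upper_bound {G : Type*}
    [AddCommGroup G] [Fintype G] [DecidableEq G] (n : ℕ) (hn : 3 ≤ n) (hodd : Odd n)
    (hcard : Fintype.card G = n) (F : G → G) (hF : Function.Bijective F)
    (hopt : ambiguity F = 2 * (n - 1)) :
    ∃ (χ ψ : AddChar G ℂ), ψ ≠ 1 ∧
      (n : ℝ) + 4 ≤ ‖∑ x : G, ψ (F x) * (starRingEnd ℂ) (χ x)‖ ^ 2 :=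
  optimum_ambiguity_nonlinearity_upper_bound_general n hn hcard F hopt
end

section
/- Let G₁ and G₂ be finite abelian groups and let F : G₁ → G₂ be any function. Then 2·𝒜(F) ≥ (|G₁| − 1)·(⌈|G₁|²/|G₂|⌉ − |G₁|), where ⌈·⌉ denotes the ceiling of the rational number |G₁|²/|G₂|. -/
open Finset

/-! For each shift `a ≠ 0` the numbers `δ_F(a, b)` count the `|G₁|` points `x` sorted into `|G₂|`
boxes by the difference `F (x + a) - F x`, so Cauchy–Schwarz gives `Σ_b δ_F(a, b)² ≥ ⌈|G₁|² / |G₂|⌉`;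
since `2 · C(δ, 2) = δ² - δ`, each nonzero shift contributes at least `⌈|G₁|² / |G₂|⌉ - |G₁|` to
`2 · 𝒜(F)`. -/

lemma two_mul_choose_two (d : ℕ) : (2 * d.choose 2 : ℤ) = d ^ 2 - d := by
  have h : (2 * d.choose 2 : ℚ) = d ^ 2 - d := by
    rw [Nat.cast_choose_two]
    ring
  exact_mod_cast h

/-- Cauchy–Schwarz, rounded up since the right-hand side is an integer. For `s = ∅` the quotient
is the junk value `x / 0 = 0`. -/
lemma ceil_sq_sum_div_card_le_sum_sq {ι : Type*} (s : Finset ι) (f : ι → ℤ) :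
    ⌈((∑ i ∈ s, f i : ℤ) : ℚ) ^ 2 / #s⌉ ≤ ∑ i ∈ s, f i ^ 2 := by
  rw [Int.ceil_le]
  refine div_le_of_le_mul₀ (Nat.cast_nonneg _) (by positivity) ?_
  rw [mul_comm]
  exact_mod_cast sq_sum_le_card_mul_sum_sq (s := s) (f := f)

lemma ceil_sq_sum_div_card_sub_sum_le_two_mul_sum_choose_two {ι : Type*} (s : Finset ι)
    (f : ι → ℕ) :
    ⌈((∑ i ∈ s, f i : ℕ) : ℚ) ^ 2 / #s⌉ - ∑ i ∈ s, (f i : ℤ) ≤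
      2 * ∑ i ∈ s, ((f i).choose 2 : ℤ) := by
  have hpairs : 2 * ∑ i ∈ s, ((f i).choose 2 : ℤ) = ∑ i ∈ s, (f i : ℤ) ^ 2 - ∑ i ∈ s, (f i : ℤ) := by
    rw [mul_sum, ← sum_sub_distrib]
    exact sum_congr rfl fun i _ => two_mul_choose_two (f i)
  have hCS := ceil_sq_sum_div_card_le_sum_sq s (fun i => (f i : ℤ))
  push_cast at hCS ⊢
  linarith

lemma sum_deltaF_s8 {G₁ G₂ : Type*} [AddCommGroup G₁] [Fintype G₁] [DecidableEq G₁]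
    [AddCommGroup G₂] [Fintype G₂] [DecidableEq G₂] (F : G₁ → G₂) (a : G₁) :
    ∑ b, deltaF F a b = Fintype.card G₁ :=
  (card_eq_sum_card_fiberwise fun x _ => mem_univ (F (x + a) - F x)).symm

theorem ambiguity_general_lower_bound {G₁ G₂ : Type*}
    [AddCommGroup G₁] [Fintype G₁] [DecidableEq G₁]
    [AddCommGroup G₂] [Fintype G₂] [DecidableEq G₂] (F : G₁ → G₂) :
    ((Fintype.card G₁ : ℤ) - 1) *
        (⌈((Fintype.card G₁ : ℚ) ^ 2 / (Fintype.card G₂ : ℚ))⌉ - (Fintype.card G₁ : ℤ)) ≤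
      2 * (ambiguity F : ℤ) := by
  set n := Fintype.card G₁
  have hshifts : (#(univ.filter fun a : G₁ => a ≠ 0) : ℤ) = n - 1 := by
    rw [filter_ne', card_erase_of_mem (mem_univ _), card_univ, Nat.cast_pred Fintype.card_pos]
  have hper (a : G₁) : ⌈(n : ℚ) ^ 2 / Fintype.card G₂⌉ - n ≤
      2 * ∑ b, ((deltaF F a b).choose 2 : ℤ) := by
    have h := ceil_sq_sum_div_card_sub_sum_le_two_mul_sum_choose_two univ (deltaF F a)
    rwa [← Nat.cast_sum, sum_deltaF_s8, card_univ] at h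
  calc ((n : ℤ) - 1) * (⌈(n : ℚ) ^ 2 / Fintype.card G₂⌉ - n)
      = ∑ a ∈ univ.filter (· ≠ 0), (⌈(n : ℚ) ^ 2 / Fintype.card G₂⌉ - n) := by
        rw [sum_const, nsmul_eq_mul, hshifts]
    _ ≤ ∑ a ∈ univ.filter (· ≠ 0), 2 * ∑ b, ((deltaF F a b).choose 2 : ℤ) :=
        sum_le_sum fun a _ => hper a
    _ = 2 * (ambiguity F : ℤ) := by
        rw [ambiguity, ← mul_sum]
        push_cast
        rfl
end

section
/- Let n > 2 and m ≥ 1 be integers such that either n is odd and m < n, or n is even and n/2 < m < n. Then for every function F : 𝔽₂ⁿ → 𝔽₂ᵐ, the fourth moment of the Walsh transform satisfies Σ_{α ∈ 𝔽₂ⁿ} Σ_{β ∈ 𝔽₂ᵐ} W_F(α,β)⁴ ≥ 2^(4n) + 2^(3n)·(2ᵐ − 1) + 3·2^(n+m+1). -/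
open Finset

/-- The Walsh transform `W_F(α,β) = Σ_x (−1)^(β·F(x) + α·x)` of `F : 𝔽₂ⁿ → 𝔽₂ᵐ`. -/
def walsh {n m : ℕ} (F : (Fin n → ZMod 2) → (Fin m → ZMod 2))
    (α : Fin n → ZMod 2) (β : Fin m → ZMod 2) : ℤ :=
  ∑ x : Fin n → ZMod 2,
    if (∑ i, β i * F x i) + (∑ i, α i * x i) = (0 : ZMod 2) then 1 else -1

/-! Writing `W_F(α, β)` as the Walsh–Hadamard transform of `x ↦ (-1)^(β·F x)`, two applications
of Parseval give `Σ_{α,β} W_F(α, β)^4 = 2^(n+m) Σ_{a,b} δ_F(a, b)^2`, where `δ_F` is the difference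
distribution table of `F`. For `a ≠ 0` the row `δ_F(a, ·)` has sum `2^n` and even entries, so its
sum of squares exceeds the balanced value `2^(2n-m)` by at least `8` unless the row is constant.
All rows are constant only for perfect nonlinear functions, and these force `n` to be even
(`W_F(0, β)^2 = 2^n` for `β ≠ 0`) and `m ≤ n/2` (summing `W_F(0, β) = ±2^(n/2)` over `β` gives
`2^m · #F⁻¹(0)`), both of which the hypotheses exclude. -/

lemma even_of_sq_eq_two_pow {z : ℤ} {n : ℕ} (h : z ^ 2 = 2 ^ n) : Even n := by
  have hz : z.natAbs ^ 2 = 2 ^ n := by simpa using congrArg Int.natAbs h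
  have hv := congrArg (padicValNat 2) hz
  rw [padicValNat.pow, padicValNat.prime_pow] at hv
  exact ⟨padicValNat 2 z.natAbs, by omega⟩

lemma sum_sq_eq_card_mul_sq_add_sum_sq_sub {α R : Type*} [CommRing R] (s : Finset α)
    (f : α → R) (c : R) (h : ∑ x ∈ s, f x = #s * c) :
    ∑ x ∈ s, f x ^ 2 = #s * c ^ 2 + ∑ x ∈ s, (f x - c) ^ 2 := by
  simp only [sub_sq, sum_add_distrib, sum_sub_distrib, ← sum_mul, ← mul_sum, sum_const,
    nsmul_eq_mul, h]
  ring

lemma eight_le_sum_sq_of_even {α : Type*} {s : Finset α} {e : α → ℤ}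
    (heven : ∀ x ∈ s, Even (e x)) (hsum : ∑ x ∈ s, e x = 0) {x₀ : α} (hx₀ : x₀ ∈ s)
    (hne : e x₀ ≠ 0) : 8 ≤ ∑ x ∈ s, e x ^ 2 := by
  have four_le : ∀ x ∈ s, e x ≠ 0 → 4 ≤ e x ^ 2 := by
    intro x hx hx0
    obtain ⟨c, hc⟩ := heven x hx
    have hc0 : c ≠ 0 := by rintro rfl; simp [hc] at hx0
    rw [hc]
    nlinarith [Int.one_le_abs hc0, sq_abs c]
  -- the sum vanishes, so a second entry is nonzero
  obtain ⟨x₁, hx₁, hx₁₀, hne₁⟩ : ∃ x₁ ∈ s, x₁ ≠ x₀ ∧ e x₁ ≠ 0 := by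
    by_contra! hall
    exact hne (by rw [← hsum, sum_eq_single_of_mem x₀ hx₀ hall])
  calc 8 ≤ e x₀ ^ 2 + e x₁ ^ 2 := by linarith [four_le x₀ hx₀ hne, four_le x₁ hx₁ hne₁]
    _ ≤ ∑ x ∈ s, e x ^ 2 := add_le_sum (fun _ _ => sq_nonneg _) hx₀ hx₁ hx₁₀.symm

section Transform

variable {ι : Type*} [Fintype ι] [DecidableEq ι]

def chi (c : ZMod 2) : ℤ := if c = 0 then 1 else -1

lemma chi_add (a b : ZMod 2) : chi (a + b) = chi a * chi b := by
  revert a b; decide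

lemma chi_mul_self (c : ZMod 2) : chi c * chi c = 1 := by
  revert c; decide

lemma sum_chi_dotProduct (c : ι → ZMod 2) :
    ∑ α : ι → ZMod 2, chi (α ⬝ᵥ c) = if c = 0 then 2 ^ Fintype.card ι else 0 := by
  split_ifs with hc
  · subst hc
    simp only [dotProduct_zero]
    simp [chi]
  obtain ⟨i, hi⟩ : ∃ i, c i ≠ 0 := by simpa [funext_iff] using hc
  -- translating by the `i`-th basis vector flips every sign
  have hflip : ∀ α : ι → ZMod 2, chi ((α + Pi.single i 1) ⬝ᵥ c) = -chi (α ⬝ᵥ c) := by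
    intro α
    rw [add_dotProduct, chi_add, single_dotProduct, one_mul]
    simp [chi, hi]
  have hsum := Equiv.sum_comp (Equiv.addRight (Pi.single i (1 : ZMod 2))) fun α => chi (α ⬝ᵥ c)
  simp only [Equiv.coe_addRight, hflip, sum_neg_distrib] at hsum
  linarith

def hadamardTransform (f : (ι → ZMod 2) → ℤ) (α : ι → ZMod 2) : ℤ :=
  ∑ x, f x * chi (α ⬝ᵥ x)

def autocorrelation (f : (ι → ZMod 2) → ℤ) (a : ι → ZMod 2) : ℤ :=
  ∑ x, f x * f (x + a)

lemma hadamardTransform_zero (f : (ι → ZMod 2) → ℤ) : hadamardTransform f 0 = ∑ x, f x := by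
  simp [hadamardTransform, chi]

lemma hadamardTransform_const {α : ι → ZMod 2} (hα : α ≠ 0) (c : ℤ) :
    hadamardTransform (fun _ => c) α = 0 := by
  simp only [hadamardTransform, ← mul_sum, dotProduct_comm α, sum_chi_dotProduct, if_neg hα,
    mul_zero]

lemma sum_hadamardTransform (f : (ι → ZMod 2) → ℤ) :
    ∑ α, hadamardTransform f α = 2 ^ Fintype.card ι * f 0 := by
  simp only [hadamardTransform]
  rw [sum_comm]
  simp only [← mul_sum, sum_chi_dotProduct, mul_ite, mul_zero, sum_ite_eq', mem_univ, if_true]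
  ring

lemma sq_hadamardTransform (f : (ι → ZMod 2) → ℤ) (α : ι → ZMod 2) :
    hadamardTransform f α ^ 2 = hadamardTransform (autocorrelation f) α := by
  have hchi : ∀ x a : ι → ZMod 2, chi (α ⬝ᵥ x) * chi (α ⬝ᵥ (x + a)) = chi (α ⬝ᵥ a) := by
    intro x a
    rw [dotProduct_add, chi_add, ← mul_assoc, chi_mul_self, one_mul]
  rw [sq, hadamardTransform, sum_mul_sum, hadamardTransform]
  simp only [autocorrelation, sum_mul]
  rw [sum_comm (f := fun a x => f x * f (x + a) * chi (α ⬝ᵥ a))]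
  refine sum_congr rfl fun x _ => ?_
  rw [← Equiv.sum_comp (Equiv.addLeft x)]
  refine sum_congr rfl fun a _ => ?_
  rw [Equiv.coe_addLeft, ← hchi x a]
  ring

lemma sum_sq_hadamardTransform (f : (ι → ZMod 2) → ℤ) :
    ∑ α, hadamardTransform f α ^ 2 = 2 ^ Fintype.card ι * ∑ x, f x ^ 2 := by
  simp only [sq_hadamardTransform]
  rw [sum_hadamardTransform]
  simp [autocorrelation, sq]

end Transform

section DifferenceDistribution

variable {ι κ : Type*} [Fintype ι] [DecidableEq ι] [Fintype κ]
  (F : (ι → ZMod 2) → κ → ZMod 2)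

/-- An entry `δ_F(a, b)` of the difference distribution table of `F`. -/
def ddt (a : ι → ZMod 2) (b : κ → ZMod 2) : ℕ := #{x | F (x + a) + F x = b}

lemma sum_ddt [DecidableEq κ] (a : ι → ZMod 2) : ∑ b, ddt F a b = 2 ^ Fintype.card ι := by
  simp only [ddt]
  rw [← card_eq_sum_card_fiberwise (by simp)]
  simp

lemma ddt_zero_left (b : κ → ZMod 2) : ddt F 0 b = if b = 0 then 2 ^ Fintype.card ι else 0 := by
  simp only [ddt, add_zero, ZModModule.add_self]
  split_ifs with hb
  · simp [hb]
  · simp [Ne.symm hb]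

lemma even_ddt {a : ι → ZMod 2} (ha : a ≠ 0) (b : κ → ZMod 2) : Even (ddt F a b) := by
  have hinv : ∀ x : ι → ZMod 2, x + a + a = x := fun x => by
    rw [add_assoc, ZModModule.add_self, add_zero]
  -- `x ↦ x + a` is a fixed-point-free involution of the fibre
  rw [← ZMod.natCast_eq_zero_iff_even, ddt, card_eq_sum_ones, Nat.cast_sum, Nat.cast_one]
  refine sum_involution (fun x _ => x + a) (fun _ _ => by decide) (fun x _ _ => ?_)
    (fun x hx => ?_) fun x _ => hinv x
  · simpa using ha
  · simp only [mem_filter, mem_univ, true_and] at hx ⊢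
    rw [hinv, add_comm, hx]

lemma hadamardTransform_ddt [DecidableEq κ] (a : ι → ZMod 2) (β : κ → ZMod 2) :
    hadamardTransform (fun b => (ddt F a b : ℤ)) β =
      autocorrelation (fun x => chi (β ⬝ᵥ F x)) a := by
  calc ∑ b, (ddt F a b : ℤ) * chi (β ⬝ᵥ b)
      = ∑ b, ∑ x with F (x + a) + F x = b, chi (β ⬝ᵥ (F (x + a) + F x)) := by
        refine sum_congr rfl fun b _ => ?_
        rw [sum_congr rfl fun x hx => by rw [(mem_filter.1 hx).2], sum_const, nsmul_eq_mul, ddt]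
    _ = ∑ x, chi (β ⬝ᵥ F x) * chi (β ⬝ᵥ F (x + a)) := by
        rw [sum_fiberwise]
        simp only [dotProduct_add, chi_add, mul_comm]

def IsPerfectNonlinear : Prop := ∀ a : ι → ZMod 2, a ≠ 0 → ∀ b b', ddt F a b = ddt F a b'

variable [DecidableEq κ]

lemma sum_sq_ddt_zero_left :
    ∑ b, (ddt F 0 b : ℤ) ^ 2 = 2 ^ (2 * Fintype.card ι) := by
  simp [ddt_zero_left, ← pow_mul, mul_comm]

lemma sum_sq_ddt_eq {k : ℕ} (hk : Fintype.card κ + k = Fintype.card ι) (a : ι → ZMod 2) :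
    ∑ b, (ddt F a b : ℤ) ^ 2 =
      2 ^ Fintype.card κ * (2 ^ k) ^ 2 + ∑ b, ((ddt F a b : ℤ) - 2 ^ k) ^ 2 := by
  have hcard : ((#(univ : Finset (κ → ZMod 2)) : ℕ) : ℤ) = 2 ^ Fintype.card κ := by simp
  rw [← hcard]
  refine sum_sq_eq_card_mul_sq_add_sum_sq_sub _ _ _ ?_
  rw [hcard, ← pow_add, hk]
  exact_mod_cast sum_ddt F a

lemma eight_le_sum_sq_ddt_sub {k : ℕ} (hk : Fintype.card κ + k = Fintype.card ι) (hk0 : k ≠ 0)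
    {a : ι → ZMod 2} (ha : a ≠ 0) {b : κ → ZMod 2} (hb : ddt F a b ≠ 2 ^ k) :
    8 ≤ ∑ b, ((ddt F a b : ℤ) - 2 ^ k) ^ 2 := by
  refine eight_le_sum_sq_of_even (fun b _ => ?_) ?_ (mem_univ b) (sub_ne_zero.2 ?_)
  · exact ((even_ddt F ha b).natCast).sub (even_two.pow_of_ne_zero hk0)
  · rw [sum_sub_distrib]
    simp [← Nat.cast_sum, sum_ddt, ← hk, pow_add]
  · exact_mod_cast hb

lemma sum_sq_ddt_ge {k : ℕ} (hk : Fintype.card κ + k = Fintype.card ι) (hk0 : k ≠ 0)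
    (hF : ¬IsPerfectNonlinear F) :
    2 ^ (2 * Fintype.card ι) + (2 ^ Fintype.card ι - 1) * (2 ^ Fintype.card κ * (2 ^ k) ^ 2) + 8
      ≤ ∑ a, ∑ b, (ddt F a b : ℤ) ^ 2 := by
  obtain ⟨a₀, ha₀, b₀, hb₀⟩ : ∃ a ≠ 0, ∃ b, ddt F a b ≠ 2 ^ k := by
    by_contra! h
    exact hF fun a ha b b' => by rw [h a ha b, h a ha b']
  set E : (ι → ZMod 2) → ℤ := fun a => ∑ b, ((ddt F a b : ℤ) - 2 ^ k) ^ 2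
  have hE₀ := sum_sq_ddt_eq F hk 0
  rw [sum_sq_ddt_zero_left] at hE₀
  have hE := add_le_sum (f := E) (fun a _ => sum_nonneg fun b _ => sq_nonneg _)
    (mem_univ 0) (mem_univ a₀) ha₀.symm
  have h8 := eight_le_sum_sq_ddt_sub F hk hk0 ha₀ hb₀
  simp only [sum_sq_ddt_eq F hk, sum_add_distrib, sum_const, card_univ, Fintype.card_pi,
    ZMod.card, prod_const, nsmul_eq_mul]
  push_cast
  linarith

lemma sum_pow_four_hadamardTransform_chi :
    ∑ α, ∑ β, hadamardTransform (fun x => chi (β ⬝ᵥ F x)) α ^ 4 =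
      2 ^ (Fintype.card ι + Fintype.card κ) * ∑ a, ∑ b, (ddt F a b : ℤ) ^ 2 := by
  calc ∑ α, ∑ β, hadamardTransform (fun x => chi (β ⬝ᵥ F x)) α ^ 4
      = ∑ β, ∑ α, hadamardTransform (autocorrelation fun x => chi (β ⬝ᵥ F x)) α ^ 2 := by
        rw [sum_comm]
        simp only [← sq_hadamardTransform, ← pow_mul]
    _ = 2 ^ Fintype.card ι * ∑ a, ∑ β, hadamardTransform (fun b => (ddt F a b : ℤ)) β ^ 2 := by
        simp only [sum_sq_hadamardTransform, hadamardTransform_ddt, ← mul_sum]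
        rw [sum_comm]
    _ = 2 ^ (Fintype.card ι + Fintype.card κ) * ∑ a, ∑ b, (ddt F a b : ℤ) ^ 2 := by
        simp only [sum_sq_hadamardTransform, ← mul_sum, pow_add, mul_assoc]

lemma hadamardTransform_ddt_zero_left (β : κ → ZMod 2) :
    hadamardTransform (fun b => (ddt F 0 b : ℤ)) β = 2 ^ Fintype.card ι := by
  simp only [hadamardTransform, ddt_zero_left, Nat.cast_ite, ite_mul]
  simp [chi]

lemma sum_hadamardTransform_chi_zero :
    ∑ β, hadamardTransform (fun x => chi (β ⬝ᵥ F x)) 0 = 2 ^ Fintype.card κ * #{x | F x = 0} := by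
  simp only [hadamardTransform_zero]
  rw [sum_comm]
  simp only [sum_chi_dotProduct]
  rw [sum_ite, sum_const_zero, add_zero, sum_const, nsmul_eq_mul, mul_comm]

namespace IsPerfectNonlinear

variable {F}

lemma sq_hadamardTransform_chi_zero (hF : IsPerfectNonlinear F) {β : κ → ZMod 2} (hβ : β ≠ 0) :
    hadamardTransform (fun x => chi (β ⬝ᵥ F x)) 0 ^ 2 = 2 ^ Fintype.card ι := by
  rw [sq_hadamardTransform, hadamardTransform_zero, ← add_sum_erase _ _ (mem_univ 0)]
  simp only [← hadamardTransform_ddt]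
  rw [hadamardTransform_ddt_zero_left, sum_eq_zero, add_zero]
  intro a ha
  have hconst : (fun b => (ddt F a b : ℤ)) = fun _ => (ddt F a 0 : ℤ) :=
    funext fun b => by rw [hF a (ne_of_mem_erase ha) b 0]
  rw [hconst, hadamardTransform_const hβ]

lemma even_card [Nonempty κ] (hF : IsPerfectNonlinear F) : Even (Fintype.card ι) := by
  have hβ : (fun _ => 1 : κ → ZMod 2) ≠ 0 :=
    fun h => one_ne_zero (congrFun h (Classical.arbitrary κ))
  exact even_of_sq_eq_two_pow (hF.sq_hadamardTransform_chi_zero hβ)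

theorem two_mul_card_le [Nonempty ι] [Nonempty κ] (hF : IsPerfectNonlinear F) :
    2 * Fintype.card κ ≤ Fintype.card ι := by
  obtain ⟨h, hn⟩ := hF.even_card
  by_contra! hlt
  have hh : h ≠ 0 := by have := Fintype.card_pos (α := ι); omega
  set w : (κ → ZMod 2) → ℤ := fun β => hadamardTransform (fun x => chi (β ⬝ᵥ F x)) 0
  have hw : ∀ β ∈ univ.erase 0, (2 : ℤ) ^ (h + 1) ∣ w β - 2 ^ h := by
    intro β hβ
    have hsq : w β ^ 2 = (2 ^ h) ^ 2 := by
      rw [hF.sq_hadamardTransform_chi_zero (ne_of_mem_erase hβ), hn, ← pow_mul, mul_two]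
    rcases sq_eq_sq_iff_eq_or_eq_neg.1 hsq with h1 | h1 <;> rw [h1]
    · simp
    · exact ⟨-1, by ring⟩
  have hw₀ : w 0 = 2 ^ Fintype.card ι := by simp [w, hadamardTransform_zero, chi]
  have key : (2 : ℤ) ^ h = ∑ β ∈ univ.erase 0, (w β - 2 ^ h) + 2 ^ Fintype.card ι
      + 2 ^ Fintype.card κ * 2 ^ h - 2 ^ Fintype.card κ * #{x | F x = 0} := by
    rw [sum_erase_eq_sub (mem_univ 0), sum_sub_distrib, sum_hadamardTransform_chi_zero, hw₀]
    simp only [sum_const, card_univ, Fintype.card_pi, ZMod.card, prod_const, Int.nsmul_eq_mul,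
      Nat.cast_pow, Nat.cast_ofNat]
    ring
  have hdvd : (2 : ℤ) ^ (h + 1) ∣ 2 ^ h := by
    rw [key]
    exact (((dvd_sum hw).add (pow_dvd_pow 2 (by omega))).add
      ((pow_dvd_pow 2 (by omega)).mul_right _)).sub ((pow_dvd_pow 2 (by omega)).mul_right _)
  rw [pow_dvd_pow_iff two_ne_zero (by norm_num [Int.isUnit_iff])] at hdvd
  omega

end IsPerfectNonlinear

end DifferenceDistribution

lemma walsh_eq_hadamardTransform {n m : ℕ} (F : (Fin n → ZMod 2) → Fin m → ZMod 2)
    (α : Fin n → ZMod 2) (β : Fin m → ZMod 2) :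
    walsh F α β = hadamardTransform (fun x => chi (β ⬝ᵥ F x)) α :=
  sum_congr rfl fun _ _ => chi_add _ _

theorem fourth_moment_walsh_lower_bound_general {n m : ℕ} (hm : 1 ≤ m)
    (hnm : (Odd n ∧ m < n) ∨ (Even n ∧ n / 2 < m ∧ m < n))
    (F : (Fin n → ZMod 2) → (Fin m → ZMod 2)) :
    (2 : ℤ) ^ (4 * n) + 2 ^ (3 * n) * (2 ^ m - 1) + 3 * 2 ^ (n + m + 1) ≤
      ∑ α : Fin n → ZMod 2, ∑ β : Fin m → ZMod 2, (walsh F α β) ^ 4 := by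
  have hmn : m < n := by omega
  have : Nonempty (Fin m) := ⟨⟨0, hm⟩⟩
  have : Nonempty (Fin n) := ⟨⟨0, by omega⟩⟩
  have hF : ¬IsPerfectNonlinear F := by
    intro hF
    rcases hnm with ⟨hodd, -⟩ | ⟨-, hhalf, -⟩
    · exact Nat.not_even_iff_odd.2 hodd (by simpa using hF.even_card)
    · have := hF.two_mul_card_le
      simp only [Fintype.card_fin] at this
      omega
  obtain ⟨k, rfl⟩ : ∃ k, n = m + k := ⟨n - m, by omega⟩
  have hlow := sum_sq_ddt_ge F (k := k) (by simp) (by omega) hF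
  simp only [Fintype.card_fin] at hlow
  have hmoment := sum_pow_four_hadamardTransform_chi F
  simp only [Fintype.card_fin, ← walsh_eq_hadamardTransform] at hmoment
  rw [hmoment]
  have hpos : (0 : ℤ) < 2 ^ (m + k + m) := by positivity
  have hexp : (2 : ℤ) ^ (4 * (m + k)) + 2 ^ (3 * (m + k)) * (2 ^ m - 1) + 3 * 2 ^ (m + k + m + 1)
      + 2 * 2 ^ (m + k + m) = 2 ^ (m + k + m) *
        (2 ^ (2 * (m + k)) + (2 ^ (m + k) - 1) * (2 ^ m * (2 ^ k) ^ 2) + 8) := by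
    ring
  linarith [mul_le_mul_of_nonneg_left hlow hpos.le]

theorem fourth_moment_walsh_lower_bound {n m : ℕ} (hn : 2 < n) (hm : 1 ≤ m)
    (hnm : (Odd n ∧ m < n) ∨ (Even n ∧ n / 2 < m ∧ m < n))
    (F : (Fin n → ZMod 2) → (Fin m → ZMod 2)) :
    (2 : ℤ) ^ (4 * n) + 2 ^ (3 * n) * (2 ^ m - 1) + 3 * 2 ^ (n + m + 1) ≤
      ∑ α : Fin n → ZMod 2, ∑ β : Fin m → ZMod 2, (walsh F α β) ^ 4 :=
  fourth_moment_walsh_lower_bound_general hm hnm F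
end
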